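/- Let u ∈ C²(B², ℝⁿ), Ω a smooth map from B² into antisymmetric n×n matrices of 1-forms, and suppose there exist A ∈ C¹(B², GL(n,ℝ)) and B ∈ C¹(B², Mₙ(ℝ)) with ∇A - AΩ = ∇⊥B, where ∇⊥ = (-∂_y, ∂_x). Then u solves -Δu = Ω·∇u if and only if div(A∇u + B∇⊥u) = 0. -/

import Mathlib

open MeasureTheory Metric Finset
noncomputable section

def pd {d : ℕ} (i : Fin d) (f : EuclideanSpace ℝ (Fin d) → ℝ) :
    EuclideanSpace ℝ (Fin d) → ℝ :=
  fun x => fderiv ℝ f x (EuclideanSpace.single i 1)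

def lap {d : ℕ} (f : EuclideanSpace ℝ (Fin d) → ℝ) : EuclideanSpace ℝ (Fin d) → ℝ :=
  fun x => ∑ i : Fin d, pd i (pd i f) x

def divg {d : ℕ} (v : Fin d → (EuclideanSpace ℝ (Fin d) → ℝ)) :
    EuclideanSpace ℝ (Fin d) → ℝ :=
  fun x => ∑ i : Fin d, pd i (v i) x

/-- `∇⊥ = (-∂_y, ∂_x)` : the `k`-th component of the perpendicular gradient. -/
def perpd (k : Fin 2) (f : EuclideanSpace ℝ (Fin 2) → ℝ) :
    EuclideanSpace ℝ (Fin 2) → ℝ :=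
  if k = 0 then fun x => -(pd 1 f x) else pd 0 f

lemma pd_contDiff {d : ℕ} {m : WithTop ℕ∞} {f : EuclideanSpace ℝ (Fin d) → ℝ}
    (hf : ContDiff ℝ (m + 1) f) (k : Fin d) : ContDiff ℝ m (pd k f) := by
  have h1 : ContDiff ℝ m (fderiv ℝ f) := hf.fderiv_right le_rfl
  exact (ContinuousLinearMap.apply ℝ ℝ (EuclideanSpace.single k 1)).contDiff.comp h1

lemma pd_add {d : ℕ} {f g : EuclideanSpace ℝ (Fin d) → ℝ} {x : EuclideanSpace ℝ (Fin d)}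
    (hf : DifferentiableAt ℝ f x) (hg : DifferentiableAt ℝ g x) (k : Fin d) :
    pd k (fun y => f y + g y) x = pd k f x + pd k g x := by
  unfold pd; rw [fderiv_fun_add hf hg]; simp

lemma pd_neg {d : ℕ} {f : EuclideanSpace ℝ (Fin d) → ℝ} {x : EuclideanSpace ℝ (Fin d)} (k : Fin d) :
    pd k (fun y => -(f y)) x = -(pd k f x) := by
  unfold pd; rw [fderiv_fun_neg]; simp

lemma pd_mul {d : ℕ} {f g : EuclideanSpace ℝ (Fin d) → ℝ} {x : EuclideanSpace ℝ (Fin d)}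
    (hf : DifferentiableAt ℝ f x) (hg : DifferentiableAt ℝ g x) (k : Fin d) :
    pd k (fun y => f y * g y) x = pd k f x * g x + f x * pd k g x := by
  unfold pd; rw [fderiv_fun_mul hf hg]; simp; ring

lemma pd_sum {d : ℕ} {ι : Type*} {s : Finset ι} {F : ι → EuclideanSpace ℝ (Fin d) → ℝ}
    {x : EuclideanSpace ℝ (Fin d)} (hF : ∀ i ∈ s, DifferentiableAt ℝ (F i) x) (k : Fin d) :
    pd k (fun y => ∑ i ∈ s, F i y) x = ∑ i ∈ s, pd k (F i) x := by
  unfold pd; rw [fderiv_fun_sum hF]; simp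

lemma pd_pd_symm {d : ℕ} {f : EuclideanSpace ℝ (Fin d) → ℝ} (hf : ContDiff ℝ 2 f)
    (i j : Fin d) (x : EuclideanSpace ℝ (Fin d)) :
    pd i (pd j f) x = pd j (pd i f) x := by
  have h1 : ∀ y, HasFDerivAt f (fderiv ℝ f y) y := fun y =>
    (hf.differentiable (by norm_num)).differentiableAt.hasFDerivAt
  have hdf : ContDiff ℝ 1 (fderiv ℝ f) := hf.fderiv_right (by norm_num)
  have h2 : HasFDerivAt (fderiv ℝ f) (fderiv ℝ (fderiv ℝ f) x) x :=
    (hdf.differentiable one_ne_zero).differentiableAt.hasFDerivAt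
  have hsym := second_derivative_symmetric h1 h2
  have key : ∀ a b : Fin d, pd a (pd b f) x =
      fderiv ℝ (fderiv ℝ f) x (EuclideanSpace.single a 1) (EuclideanSpace.single b 1) := by
    intro a b
    have hc : HasFDerivAt
        (fun y => (ContinuousLinearMap.apply ℝ ℝ (EuclideanSpace.single b (1:ℝ))) (fderiv ℝ f y))
        ((ContinuousLinearMap.apply ℝ ℝ (EuclideanSpace.single b (1:ℝ))).comp
          (fderiv ℝ (fderiv ℝ f) x)) x :=
      (ContinuousLinearMap.apply ℝ ℝ (EuclideanSpace.single b (1:ℝ))).hasFDerivAt.comp x h2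
    have : pd a (pd b f) x = ((ContinuousLinearMap.apply ℝ ℝ (EuclideanSpace.single b (1:ℝ))).comp
        (fderiv ℝ (fderiv ℝ f) x)) (EuclideanSpace.single a 1) := by
      unfold pd
      rw [show (fun x => (fderiv ℝ f x) (EuclideanSpace.single b (1:ℝ))) =
        (fun y => (ContinuousLinearMap.apply ℝ ℝ (EuclideanSpace.single b (1:ℝ))) (fderiv ℝ f y))
        from rfl, hc.fderiv]
    simpa using this
  rw [key, key, hsym]

/-- Rivière's conservation law: given `A, B` with `∇A - AΩ = ∇⊥B`, a map `u` solves
`-Δu = Ω·∇u` iff `div(A∇u + B∇⊥u) = 0`. -/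
theorem riviere_conservation_law (n : ℕ)
    (u : EuclideanSpace ℝ (Fin 2) → (Fin n → ℝ))
    (Ω : Fin n → Fin n → Fin 2 → (EuclideanSpace ℝ (Fin 2) → ℝ))
    (A B : EuclideanSpace ℝ (Fin 2) → Matrix (Fin n) (Fin n) ℝ)
    (hu : ∀ a, ContDiff ℝ 2 (fun y => u y a))
    (hΩ : ∀ i j k, ContDiff ℝ (⊤ : ℕ∞) (Ω i j k))
    (hΩanti : ∀ i j k x, Ω i j k x = -(Ω j i k x))
    (hA : ∀ a b, ContDiff ℝ 1 (fun y => A y a b))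
    (hB : ∀ a b, ContDiff ℝ 1 (fun y => B y a b))
    (hAinv : ∀ x, IsUnit (A x))
    -- ∇A - AΩ = ∇⊥B, componentwise
    (hgauge : ∀ x ∈ ball (0 : EuclideanSpace ℝ (Fin 2)) 1, ∀ i j : Fin n, ∀ k : Fin 2,
      pd k (fun y => A y i j) x - (∑ l : Fin n, A x i l * Ω l j k x) =
        perpd k (fun y => B y i j) x) :
    (∀ x ∈ ball (0 : EuclideanSpace ℝ (Fin 2)) 1, ∀ i : Fin n,
      -(lap (fun y => u y i) x) = ∑ j : Fin n, ∑ k : Fin 2, Ω i j k x * pd k (fun y => u y j) x)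
    ↔
    (∀ x ∈ ball (0 : EuclideanSpace ℝ (Fin 2)) 1, ∀ i : Fin n,
      divg (fun k => fun y =>
        (∑ j : Fin n, A y i j * pd k (fun z => u z j) y) +
        (∑ j : Fin n, B y i j * perpd k (fun z => u z j) y)) x = 0) := by
  classical
  have h12 : ((1:WithTop ℕ∞) + 1) = 2 := by norm_num
  have hu' : ∀ j, ContDiff ℝ ((1:WithTop ℕ∞) + 1) (fun y => u y j) := fun j => h12 ▸ hu j
  have hpdUd : ∀ (k : Fin 2) (j : Fin n) x, DifferentiableAt ℝ (pd k (fun y => u y j)) x :=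
    fun k j x => (((pd_contDiff (hu' j) k)).differentiable one_ne_zero).differentiableAt
  have hperpUd : ∀ (k : Fin 2) (j : Fin n) x,
      DifferentiableAt ℝ (perpd k (fun y => u y j)) x := by
    intro k j x
    fin_cases k
    · simpa [perpd] using (hpdUd 1 j x).neg
    · simpa [perpd] using hpdUd 0 j x
  have hAd : ∀ (a b : Fin n) x, DifferentiableAt ℝ (fun y => A y a b) x :=
    fun a b x => ((hA a b).differentiable one_ne_zero).differentiableAt
  have hBd : ∀ (a b : Fin n) x, DifferentiableAt ℝ (fun y => B y a b) x :=
    fun a b x => ((hB a b).differentiable one_ne_zero).differentiableAt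
  have expand : ∀ (k : Fin 2) (x : EuclideanSpace ℝ (Fin 2)) (i : Fin n),
      pd k (fun y => (∑ j : Fin n, A y i j * pd k (fun z => u z j) y) +
        (∑ j : Fin n, B y i j * perpd k (fun z => u z j) y)) x
      = ∑ j : Fin n, (pd k (fun y => A y i j) x * pd k (fun z => u z j) x
            + A x i j * pd k (pd k (fun z => u z j)) x
            + (pd k (fun y => B y i j) x * perpd k (fun z => u z j) x
            + B x i j * pd k (perpd k (fun z => u z j)) x)) := by
    intro k x i
    rw [pd_add (DifferentiableAt.fun_sum fun j _ => (hAd i j x).fun_mul (hpdUd k j x))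
        (DifferentiableAt.fun_sum fun j _ => (hBd i j x).fun_mul (hperpUd k j x)) k,
        pd_sum (fun j _ => (hAd i j x).fun_mul (hpdUd k j x)) k,
        pd_sum (fun j _ => (hBd i j x).fun_mul (hperpUd k j x)) k,
        ← Finset.sum_add_distrib]
    refine Finset.sum_congr rfl fun j _ => ?_
    rw [pd_mul (hAd i j x) (hpdUd k j x) k, pd_mul (hBd i j x) (hperpUd k j x) k]
  have key : ∀ (x : EuclideanSpace ℝ (Fin 2)) (i : Fin n),
      divg (fun k => fun y =>
        (∑ j : Fin n, A y i j * pd k (fun z => u z j) y) +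
        (∑ j : Fin n, B y i j * perpd k (fun z => u z j) y)) x
      = ∑ j : Fin n, (A x i j * lap (fun y => u y j) x
          + ((pd 0 (fun y => A y i j) x - perpd 0 (fun y => B y i j) x) * pd 0 (fun z => u z j) x
           + (pd 1 (fun y => A y i j) x - perpd 1 (fun y => B y i j) x) * pd 1 (fun z => u z j) x)) := by
    intro x i
    unfold divg
    rw [Fin.sum_univ_two, expand 0 x i, expand 1 x i, ← Finset.sum_add_distrib]
    refine Finset.sum_congr rfl fun j _ => ?_
    have hs := pd_pd_symm (hu j) 0 1 x
    simp only [perpd, if_pos, lap, Fin.sum_univ_two, pd_neg,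
      show ((1:Fin 2) = 0) = False by simp, if_false, if_true]
    rw [hs]
    ring
  have key2 : ∀ x ∈ ball (0 : EuclideanSpace ℝ (Fin 2)) 1, ∀ i : Fin n,
      divg (fun k => fun y =>
        (∑ j : Fin n, A y i j * pd k (fun z => u z j) y) +
        (∑ j : Fin n, B y i j * perpd k (fun z => u z j) y)) x
      = ∑ l : Fin n, A x i l *
          (lap (fun y => u y l) x + ∑ j : Fin n, ∑ k : Fin 2, Ω l j k x * pd k (fun y => u y j) x) := by
    intro x hx i
    rw [key x i]
    have hg : ∀ (j : Fin n) (k : Fin 2),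
        pd k (fun y => A y i j) x - perpd k (fun y => B y i j) x
          = ∑ l : Fin n, A x i l * Ω l j k x := by
      intro j k
      have := hgauge x hx i j k
      linarith
    have lhs_eq : (∑ j : Fin n, (A x i j * lap (fun y => u y j) x
          + ((pd 0 (fun y => A y i j) x - perpd 0 (fun y => B y i j) x) * pd 0 (fun z => u z j) x
           + (pd 1 (fun y => A y i j) x - perpd 1 (fun y => B y i j) x) * pd 1 (fun z => u z j) x)))
        = (∑ j : Fin n, A x i j * lap (fun y => u y j) x)
          + ∑ j : Fin n, ∑ l : Fin n,
            (A x i l * Ω l j 0 x * pd 0 (fun z => u z j) x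
              + A x i l * Ω l j 1 x * pd 1 (fun z => u z j) x) := by
      rw [Finset.sum_add_distrib]
      congr 1
      refine Finset.sum_congr rfl fun j _ => ?_
      rw [hg j 0, hg j 1, Finset.sum_mul, Finset.sum_mul, ← Finset.sum_add_distrib]
    rw [lhs_eq, Finset.sum_comm]
    rw [← Finset.sum_add_distrib]
    refine Finset.sum_congr rfl fun l _ => ?_
    rw [mul_add, Finset.mul_sum]
    congr 1
    refine Finset.sum_congr rfl fun j _ => ?_
    rw [Fin.sum_univ_two]
    ring
  constructor
  · intro h x hx i
    rw [key2 x hx i]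
    refine Finset.sum_eq_zero fun l _ => ?_
    have hl := h x hx l
    have : lap (fun y => u y l) x
        + ∑ j : Fin n, ∑ k : Fin 2, Ω l j k x * pd k (fun y => u y j) x = 0 := by linarith
    rw [this, mul_zero]
  · intro h x hx i
    set w : Fin n → ℝ := fun l => lap (fun y => u y l) x
        + ∑ j : Fin n, ∑ k : Fin 2, Ω l j k x * pd k (fun y => u y j) x with hw_def
    have hw : (A x).mulVec w = 0 := by
      funext l
      have hl := h x hx l
      rw [key2 x hx l] at hl
      simpa [Matrix.mulVec, dotProduct, hw_def] using hl
    haveI : Invertible (A x) := (hAinv x).invertible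
    have hw0 : w = 0 := by
      calc w = (⅟(A x) * A x).mulVec w := by rw [invOf_mul_self, Matrix.one_mulVec]
        _ = (⅟(A x)).mulVec ((A x).mulVec w) := (Matrix.mulVec_mulVec w _ _).symm
        _ = 0 := by rw [hw, Matrix.mulVec_zero]
    have hi := congrFun hw0 i
    simp only [hw_def, Pi.zero_apply] at hi
    linarith
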